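/- arXiv:2104.06085 — 3 statements merged into one kernel-verified Lean document; each statement's English description precedes it below -/
import Mathlib

section
/- For every QPTL formula φ (i.e., a GFG-QPTL formula in which every quantifier carries the trivial specification ς = (∅,∅)) and every hyperassignment 𝔄: (i) 𝔄 ⊨^{EA} φ if and only if there exists W ∈ 𝔄 such that a ⊨ φ (Tarski semantics) for all a ∈ W; (ii) 𝔄 ⊨^{AE} φ if and only if for every W ∈ 𝔄 there exists a ∈ W with a ⊨ φ. (Theorem 1, Semantics Adequacy I.) -/
namespace GFG

/-- Temporal valuations. -/
abbrev Val : Type := ℕ → Bool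

/-- Assignments over a type `AP` of atomic propositions. -/
abbrev Asg (AP : Type*) : Type _ := AP → Val

section Hyper

variable {X : Type*}

/-- A hyperassignment: a nonempty set of subsets not containing `∅`. -/
def IsHyp (𝔄 : Set (Set X)) : Prop := 𝔄 ≠ ∅ ∧ ∅ ∉ 𝔄

/-- A choice function for `𝔄`. -/
def IsChoice (𝔄 : Set (Set X)) (ϑ : Set X → X) : Prop := ∀ W ∈ 𝔄, ϑ W ∈ W

/-- The dual hyperassignment. -/
def hdual (𝔄 : Set (Set X)) : Set (Set X) :=
  { Y | ∃ ϑ : Set X → X, IsChoice 𝔄 ϑ ∧ Y = ϑ '' 𝔄 }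

/-- The preorder `⊑` on hyperassignments. -/
def hle (𝔄₁ 𝔄₂ : Set (Set X)) : Prop := ∀ W₁ ∈ 𝔄₁, ∃ W₂ ∈ 𝔄₂, W₂ ⊆ W₁

/-- The equivalence `≡` on hyperassignments. -/
def heqv (𝔄₁ 𝔄₂ : Set (Set X)) : Prop := hle 𝔄₁ 𝔄₂ ∧ hle 𝔄₂ 𝔄₁

/-- `par 𝔄`: partitions of `𝔄` into two disjoint parts. -/
def par (𝔄 : Set (Set X)) : Set (Set (Set X) × Set (Set X)) :=
  { pr | pr.1 ∪ pr.2 = 𝔄 ∧ Disjoint pr.1 pr.2 }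

end Hyper

variable {AP : Type*}

/-- `a₁ ≈_p^{>k} a₂`. -/
def ApproxGT (p : AP) (k : ℕ) (a₁ a₂ : Asg AP) : Prop :=
  (∀ q, q ≠ p → a₁ q = a₂ q) ∧ ∀ t ≤ k, a₁ p t = a₂ p t

/-- `a₁ ≈_p^{≥k} a₂`. -/
def ApproxGE (p : AP) (k : ℕ) (a₁ a₂ : Asg AP) : Prop :=
  (∀ q, q ≠ p → a₁ q = a₂ q) ∧ ∀ t < k, a₁ p t = a₂ p t

/-- Quantifier specifications `ς = (B,S)`. -/
abbrev Spec (AP : Type*) := Set AP × Set AP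

/-- A `ς`-functor. -/
def IsSpecFunctor (ς : Spec AP) (F : Asg AP → Val) : Prop :=
  (∀ (k : ℕ) (a₁ a₂ : Asg AP), (∃ p ∈ ς.1, ApproxGT p k a₁ a₂) → F a₁ k = F a₂ k) ∧
  (∀ (k : ℕ) (a₁ a₂ : Asg AP), (∃ p ∈ ς.2, ApproxGE p k a₁ a₂) → F a₁ k = F a₂ k)

variable [DecidableEq AP]

/-- `ext(a,F,p)`. -/
def extAsg (a : Asg AP) (F : Asg AP → Val) (p : AP) : Asg AP :=
  Function.update a p (F a)

/-- `ext(W,F,p)`. -/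
def extSet (W : Set (Asg AP)) (F : Asg AP → Val) (p : AP) : Set (Asg AP) :=
  (fun a => extAsg a F p) '' W

/-- `ext_ς(𝔄,p)`. -/
def extSpec (ς : Spec AP) (𝔄 : Set (Set (Asg AP))) (p : AP) : Set (Set (Asg AP)) :=
  { Y | ∃ W ∈ 𝔄, ∃ F : Asg AP → Val, IsSpecFunctor ς F ∧ Y = extSet W F p }

/-- Alternation flags. -/
inductive Flag : Type
  | EA : Flag
  | AE : Flag
  deriving DecidableEq

/-- The dual flag. -/
def Flag.dual : Flag → Flag
  | .EA => .AE
  | .AE => .EA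

/-- GFG-QPTL formulas (LTL formulas abstracted as arbitrary sets of assignments). -/
inductive Formula (AP : Type*) : Type _ where
  | atom : Set (Asg AP) → Formula AP
  | neg : Formula AP → Formula AP
  | conj : Formula AP → Formula AP → Formula AP
  | disj : Formula AP → Formula AP → Formula AP
  | ex : AP → Spec AP → Formula AP → Formula AP
  | all : AP → Spec AP → Formula AP → Formula AP

/-- The alternating Hodges semantics `𝔄 ⊨^α φ`. -/
def Sat : Formula AP → Flag → Set (Set (Asg AP)) → Prop
  | .atom Ψ, .EA, 𝔄 => ∃ W ∈ 𝔄, W ⊆ Ψ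
  | .atom Ψ, .AE, 𝔄 => ∀ W ∈ 𝔄, W ∩ Ψ ≠ ∅
  | .neg φ, α, 𝔄 => ¬ Sat φ α.dual 𝔄
  | .conj φ₁ φ₂, .EA, 𝔄 =>
      ∀ pr ∈ par 𝔄, (pr.1 ≠ ∅ ∧ Sat φ₁ .EA pr.1) ∨ (pr.2 ≠ ∅ ∧ Sat φ₂ .EA pr.2)
  | .conj φ₁ φ₂, .AE, 𝔄 =>
      ∀ pr ∈ par (hdual 𝔄), (pr.1 ≠ ∅ ∧ Sat φ₁ .EA pr.1) ∨ (pr.2 ≠ ∅ ∧ Sat φ₂ .EA pr.2)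
  | .disj φ₁ φ₂, .AE, 𝔄 =>
      ∃ pr ∈ par 𝔄, (pr.1 ≠ ∅ → Sat φ₁ .AE pr.1) ∧ (pr.2 ≠ ∅ → Sat φ₂ .AE pr.2)
  | .disj φ₁ φ₂, .EA, 𝔄 =>
      ∃ pr ∈ par (hdual 𝔄), (pr.1 ≠ ∅ → Sat φ₁ .AE pr.1) ∧ (pr.2 ≠ ∅ → Sat φ₂ .AE pr.2)
  | .ex p ς φ, .EA, 𝔄 => Sat φ .EA (extSpec ς 𝔄 p)
  | .ex p ς φ, .AE, 𝔄 => Sat φ .EA (extSpec ς (hdual 𝔄) p)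
  | .all p ς φ, .AE, 𝔄 => Sat φ .AE (extSpec ς 𝔄 p)
  | .all p ς φ, .EA, 𝔄 => Sat φ .AE (extSpec ς (hdual 𝔄) p)

/-- The Tarski semantics `a ⊨ φ` (quantifier specifications are ignored). -/
def TSat : Formula AP → Asg AP → Prop
  | .atom Ψ, a => a ∈ Ψ
  | .neg φ, a => ¬ TSat φ a
  | .conj φ₁ φ₂, a => TSat φ₁ a ∧ TSat φ₂ a
  | .disj φ₁ φ₂, a => TSat φ₁ a ∨ TSat φ₂ a
  | .ex p _ φ, a => ∃ f : Val, TSat φ (Function.update a p f)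
  | .all p _ φ, a => ∀ f : Val, TSat φ (Function.update a p f)

/-- QPTL formulas: every quantifier carries the trivial specification `(∅,∅)`. -/
def IsQPTL : Formula AP → Prop
  | .atom _ => True
  | .neg φ => IsQPTL φ
  | .conj φ₁ φ₂ => IsQPTL φ₁ ∧ IsQPTL φ₂
  | .disj φ₁ φ₂ => IsQPTL φ₁ ∧ IsQPTL φ₂
  | .ex _ ς φ => ς = (∅, ∅) ∧ IsQPTL φ
  | .all _ ς φ => ς = (∅, ∅) ∧ IsQPTL φ


section Aux

variable {X : Type*}

lemma hdual_exists_forall [Nonempty X] (𝔄 : Set (Set X)) (P : X → Prop) :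
    (∃ Y ∈ hdual 𝔄, ∀ a ∈ Y, P a) ↔ ∀ W ∈ 𝔄, ∃ a ∈ W, P a := by
  classical
  constructor
  · rintro ⟨Y, ⟨ϑ, hϑ, rfl⟩, hP⟩ W hW
    exact ⟨ϑ W, hϑ W hW, hP _ (Set.mem_image_of_mem ϑ hW)⟩
  · intro H
    refine ⟨_, ⟨fun W => if h : ∃ a ∈ W, P a then h.choose else Classical.arbitrary X,
      ?_, rfl⟩, ?_⟩
    · intro W hW
      have h := H W hW
      simp only [dif_pos h]
      exact h.choose_spec.1
    · rintro a ⟨W, hW, rfl⟩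
      have h := H W hW
      simp only [dif_pos h]
      exact h.choose_spec.2

lemma hdual_forall_exists [Nonempty X] (𝔄 : Set (Set X)) (P : X → Prop) :
    (∀ Y ∈ hdual 𝔄, ∃ a ∈ Y, P a) ↔ ∃ W ∈ 𝔄, ∀ a ∈ W, P a := by
  rw [← not_iff_not]
  push_neg
  exact hdual_exists_forall 𝔄 (fun a => ¬ P a)

lemma isHyp_hdual [Nonempty X] {𝔄 : Set (Set X)} (h : IsHyp 𝔄) : IsHyp (hdual 𝔄) := by
  classical
  obtain ⟨hne, hnem⟩ := h
  constructor
  · have : ((fun W => if hw : W.Nonempty then hw.choose else Classical.arbitrary X) ''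
        𝔄) ∈ hdual 𝔄 := by
      refine ⟨_, ?_, rfl⟩
      intro W hW
      have hw : W.Nonempty := Set.nonempty_iff_ne_empty.mpr (fun hE => hnem (hE ▸ hW))
      simp only [dif_pos hw]
      exact hw.choose_spec
    exact Set.nonempty_iff_ne_empty.mp ⟨_, this⟩
  · rintro ⟨ϑ, hϑ, hY⟩
    obtain ⟨W, hW⟩ := Set.nonempty_iff_ne_empty.mpr hne
    have : ϑ W ∈ (∅ : Set X) := hY ▸ Set.mem_image_of_mem ϑ hW
    exact this

end Aux

lemma isSpecFunctor_triv (F : Asg AP → Val) :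
    IsSpecFunctor ((∅, ∅) : Spec AP) F := by
  constructor <;> · rintro k a₁ a₂ ⟨p, hp, -⟩; exact absurd hp (Set.notMem_empty p)

lemma isHyp_extSpec (ς : Spec AP) {𝔄 : Set (Set (Asg AP))} (h : IsHyp 𝔄) (p : AP) :
    IsHyp (extSpec ς 𝔄 p) := by
  obtain ⟨hne, hnem⟩ := h
  constructor
  · obtain ⟨W, hW⟩ := Set.nonempty_iff_ne_empty.mpr hne
    have hF : IsSpecFunctor ς (fun _ _ => false) :=
      ⟨fun _ _ _ _ => rfl, fun _ _ _ _ => rfl⟩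
    exact Set.nonempty_iff_ne_empty.mp ⟨_, W, hW, _, hF, rfl⟩
  · rintro ⟨W, hW, F, hF, hY⟩
    have : W = ∅ := by
      rw [← Set.image_eq_empty (f := fun a => extAsg a F p)]
      exact hY.symm
    exact hnem (this ▸ hW)

/-- Theorem 1 (Semantics Adequacy I). -/
theorem semantics_adequacy (φ : Formula AP) (hφ : IsQPTL φ)
    (𝔄 : Set (Set (Asg AP))) (h : IsHyp 𝔄) :
    (Sat φ .EA 𝔄 ↔ ∃ W ∈ 𝔄, ∀ a ∈ W, TSat φ a) ∧
    (Sat φ .AE 𝔄 ↔ ∀ W ∈ 𝔄, ∃ a ∈ W, TSat φ a) := by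
  revert hφ
  induction φ generalizing 𝔄 h with
  | atom Ψ =>
    intro _
    constructor
    · exact Iff.rfl
    · show (∀ W ∈ 𝔄, W ∩ Ψ ≠ ∅) ↔ _
      refine forall₂_congr fun W _ => ?_
      rw [← Set.nonempty_iff_ne_empty]
      exact Set.inter_nonempty.trans (by simp [TSat])
  | neg φ ih =>
    intro hφ
    obtain ⟨ihEA, ihAE⟩ := ih 𝔄 h hφ
    constructor
    · show ¬ Sat φ .AE 𝔄 ↔ _
      rw [ihAE]
      constructor
      · intro H
        push_neg at H
        exact H
      · intro H
        push_neg
        exact H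
    · show ¬ Sat φ .EA 𝔄 ↔ _
      rw [ihEA]
      constructor
      · intro H
        push_neg at H
        exact H
      · intro H
        push_neg
        exact H
  | conj φ₁ φ₂ ih₁ ih₂ =>
    intro hφ
    have key : ∀ (𝔅 : Set (Set (Asg AP))), IsHyp 𝔅 →
        (Sat (.conj φ₁ φ₂) .EA 𝔅 ↔ ∃ W ∈ 𝔅, ∀ a ∈ W, TSat (.conj φ₁ φ₂) a) := by
      intro 𝔅 h𝔅
      constructor
      · intro H
        by_contra hc
        push_neg at hc
        set 𝔅₁ : Set (Set (Asg AP)) := {W ∈ 𝔅 | ¬ ∀ a ∈ W, TSat φ₁ a} with h𝔅₁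
        have hsub : 𝔅₁ ⊆ 𝔅 := Set.sep_subset _ _
        have hpar : (𝔅₁, 𝔅 \ 𝔅₁) ∈ par 𝔅 :=
          ⟨Set.union_diff_cancel hsub, Set.disjoint_sdiff_right⟩
        rcases H _ hpar with ⟨hne, hSat⟩ | ⟨hne, hSat⟩
        · have hhyp : IsHyp 𝔅₁ := ⟨hne, fun hE => h𝔅.2 (hsub hE)⟩
          obtain ⟨W, hW, hall⟩ := ((ih₁ _ hhyp hφ.1).1).mp hSat
          exact hW.2 hall
        · have hhyp : IsHyp (𝔅 \ 𝔅₁) := ⟨hne, fun hE => h𝔅.2 hE.1⟩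
          obtain ⟨W, hW, hall₂⟩ := ((ih₂ _ hhyp hφ.2).1).mp hSat
          have hall₁ : ∀ a ∈ W, TSat φ₁ a := by
            by_contra hc₁
            exact hW.2 ⟨hW.1, hc₁⟩
          obtain ⟨a, ha, hna⟩ := hc W hW.1
          exact hna ⟨hall₁ a ha, hall₂ a ha⟩
      · rintro ⟨W, hW, hall⟩
        rintro ⟨𝔅₁, 𝔅₂⟩ ⟨hunion, hdisj⟩
        have hW' : W ∈ 𝔅₁ ∪ 𝔅₂ := hunion ▸ hW
        have hsub₁ : 𝔅₁ ⊆ 𝔅 := hunion ▸ Set.subset_union_left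
        have hsub₂ : 𝔅₂ ⊆ 𝔅 := hunion ▸ Set.subset_union_right
        rcases hW' with hW₁ | hW₂
        · left
          have hhyp : IsHyp 𝔅₁ :=
            ⟨Set.nonempty_iff_ne_empty.mp ⟨W, hW₁⟩, fun hE => h𝔅.2 (hsub₁ hE)⟩
          exact ⟨hhyp.1, ((ih₁ _ hhyp hφ.1).1).mpr ⟨W, hW₁, fun a ha => (hall a ha).1⟩⟩
        · right
          have hhyp : IsHyp 𝔅₂ :=
            ⟨Set.nonempty_iff_ne_empty.mp ⟨W, hW₂⟩, fun hE => h𝔅.2 (hsub₂ hE)⟩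
          exact ⟨hhyp.1, ((ih₂ _ hhyp hφ.2).1).mpr ⟨W, hW₂, fun a ha => (hall a ha).2⟩⟩
    refine ⟨key 𝔄 h, ?_⟩
    have : Sat (.conj φ₁ φ₂) .AE 𝔄 ↔ Sat (.conj φ₁ φ₂) .EA (hdual 𝔄) := Iff.rfl
    rw [this, key (hdual 𝔄) (isHyp_hdual h)]
    exact hdual_exists_forall 𝔄 (TSat (.conj φ₁ φ₂))
  | disj φ₁ φ₂ ih₁ ih₂ =>
    intro hφ
    have key : ∀ (𝔅 : Set (Set (Asg AP))), IsHyp 𝔅 →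
        (Sat (.disj φ₁ φ₂) .AE 𝔅 ↔ ∀ W ∈ 𝔅, ∃ a ∈ W, TSat (.disj φ₁ φ₂) a) := by
      intro 𝔅 h𝔅
      constructor
      · rintro ⟨⟨𝔅₁, 𝔅₂⟩, ⟨hunion, hdisj⟩, h₁, h₂⟩ W hW
        have hW' : W ∈ 𝔅₁ ∪ 𝔅₂ := hunion ▸ hW
        have hsub₁ : 𝔅₁ ⊆ 𝔅 := hunion ▸ Set.subset_union_left
        have hsub₂ : 𝔅₂ ⊆ 𝔅 := hunion ▸ Set.subset_union_right
        rcases hW' with hW₁ | hW₂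
        · have hhyp : IsHyp 𝔅₁ :=
            ⟨Set.nonempty_iff_ne_empty.mp ⟨W, hW₁⟩, fun hE => h𝔅.2 (hsub₁ hE)⟩
          obtain ⟨a, ha, hTa⟩ := ((ih₁ _ hhyp hφ.1).2).mp (h₁ hhyp.1) W hW₁
          exact ⟨a, ha, Or.inl hTa⟩
        · have hhyp : IsHyp 𝔅₂ :=
            ⟨Set.nonempty_iff_ne_empty.mp ⟨W, hW₂⟩, fun hE => h𝔅.2 (hsub₂ hE)⟩
          obtain ⟨a, ha, hTa⟩ := ((ih₂ _ hhyp hφ.2).2).mp (h₂ hhyp.1) W hW₂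
          exact ⟨a, ha, Or.inr hTa⟩
      · intro H
        set 𝔅₁ : Set (Set (Asg AP)) := {W ∈ 𝔅 | ∃ a ∈ W, TSat φ₁ a} with h𝔅₁
        have hsub : 𝔅₁ ⊆ 𝔅 := Set.sep_subset _ _
        refine ⟨(𝔅₁, 𝔅 \ 𝔅₁), ⟨Set.union_diff_cancel hsub, Set.disjoint_sdiff_right⟩,
          ?_, ?_⟩
        · intro hne
          have hhyp : IsHyp 𝔅₁ := ⟨hne, fun hE => h𝔅.2 (hsub hE)⟩
          exact ((ih₁ _ hhyp hφ.1).2).mpr fun W hW => hW.2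
        · intro hne
          have hhyp : IsHyp (𝔅 \ 𝔅₁) := ⟨hne, fun hE => h𝔅.2 hE.1⟩
          refine ((ih₂ _ hhyp hφ.2).2).mpr fun W hW => ?_
          obtain ⟨a, ha, hTa⟩ := H W hW.1
          rcases hTa with hTa | hTa
          · exact absurd ⟨hW.1, a, ha, hTa⟩ hW.2
          · exact ⟨a, ha, hTa⟩
    refine ⟨?_, key 𝔄 h⟩
    have : Sat (.disj φ₁ φ₂) .EA 𝔄 ↔ Sat (.disj φ₁ φ₂) .AE (hdual 𝔄) := Iff.rfl
    rw [this, key (hdual 𝔄) (isHyp_hdual h)]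
    exact hdual_forall_exists 𝔄 (TSat (.disj φ₁ φ₂))
  | ex p ς φ ih =>
    rintro ⟨rfl, hφ⟩
    have key : ∀ (𝔅 : Set (Set (Asg AP))), IsHyp 𝔅 →
        (Sat (.ex p (∅, ∅) φ) .EA 𝔅 ↔ ∃ W ∈ 𝔅, ∀ a ∈ W, TSat (.ex p (∅, ∅) φ) a) := by
      intro 𝔅 h𝔅
      have hext := ih _ (isHyp_extSpec (∅, ∅) h𝔅 p) hφ
      show Sat φ .EA (extSpec (∅, ∅) 𝔅 p) ↔ _
      rw [hext.1]
      constructor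
      · rintro ⟨Y, ⟨W, hW, F, hF, rfl⟩, hall⟩
        exact ⟨W, hW, fun a ha => ⟨F a, hall _ ⟨a, ha, rfl⟩⟩⟩
      · rintro ⟨W, hW, hex⟩
        classical
        refine ⟨_, ⟨W, hW, fun a =>
          if h : ∃ f : Val, TSat φ (Function.update a p f) then h.choose
          else (fun _ => false), isSpecFunctor_triv _, rfl⟩, ?_⟩
        rintro a' ⟨a, ha, rfl⟩
        have hh := hex a ha
        have heq : (if h : ∃ f : Val, TSat φ (Function.update a p f) then h.choose
            else (fun _ => false) : Val) = hh.choose := dif_pos hh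
        show TSat φ (Function.update a p ((fun a =>
            if h : ∃ f : Val, TSat φ (Function.update a p f) then h.choose
            else (fun _ => false)) a))
        simp only [heq]
        exact hh.choose_spec
    refine ⟨key 𝔄 h, ?_⟩
    have : Sat (.ex p (∅, ∅) φ) .AE 𝔄 ↔ Sat (.ex p (∅, ∅) φ) .EA (hdual 𝔄) := Iff.rfl
    rw [this, key (hdual 𝔄) (isHyp_hdual h)]
    exact hdual_exists_forall 𝔄 (TSat (.ex p (∅, ∅) φ))
  | all p ς φ ih =>
    rintro ⟨rfl, hφ⟩
    have key : ∀ (𝔅 : Set (Set (Asg AP))), IsHyp 𝔅 →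
        (Sat (.all p (∅, ∅) φ) .AE 𝔅 ↔ ∀ W ∈ 𝔅, ∃ a ∈ W, TSat (.all p (∅, ∅) φ) a) := by
      intro 𝔅 h𝔅
      have hext := ih _ (isHyp_extSpec (∅, ∅) h𝔅 p) hφ
      show Sat φ .AE (extSpec (∅, ∅) 𝔅 p) ↔ _
      rw [hext.2]
      constructor
      · intro H W hW
        classical
        by_contra hc
        push_neg at hc
        simp only [TSat, not_forall] at hc
        have hY : extSet W (fun a =>
            if h : ∃ f : Val, ¬ TSat φ (Function.update a p f) then h.choose
            else (fun _ => false)) p ∈ extSpec (∅, ∅) 𝔅 p :=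
          ⟨W, hW, _, isSpecFunctor_triv _, rfl⟩
        obtain ⟨a', ⟨a, ha, rfl⟩, hTa⟩ := H _ hY
        obtain ⟨f, hf⟩ := hc a ha
        have hh : ∃ f : Val, ¬ TSat φ (Function.update a p f) := ⟨f, hf⟩
        have heq : (if h : ∃ f : Val, ¬ TSat φ (Function.update a p f) then h.choose
            else (fun _ => false) : Val) = hh.choose := dif_pos hh
        apply hh.choose_spec
        have hTa' : TSat φ (Function.update a p ((fun a =>
            if h : ∃ f : Val, ¬ TSat φ (Function.update a p f) then h.choose
            else (fun _ => false)) a)) := hTa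
        simp only [heq] at hTa'
        exact hTa'
      · rintro H Y ⟨W, hW, F, hF, rfl⟩
        obtain ⟨a, ha, hTa⟩ := H W hW
        exact ⟨_, ⟨a, ha, rfl⟩, hTa (F a)⟩
    refine ⟨?_, key 𝔄 h⟩
    have : Sat (.all p (∅, ∅) φ) .EA 𝔄 ↔ Sat (.all p (∅, ∅) φ) .AE (hdual 𝔄) := Iff.rfl
    rw [this, key (hdual 𝔄) (isHyp_hdual h)]
    exact hdual_forall_exists 𝔄 (TSat (.all p (∅, ∅) φ))


end GFG
end

section
/- Let φ be a GFG-QPTL formula and 𝔄₁, 𝔄₂ hyperassignments with 𝔄₁ ⊑ 𝔄₂. Then 𝔄₁ ⊨^{EA} φ implies 𝔄₂ ⊨^{EA} φ, and 𝔄₂ ⊨^{AE} φ implies 𝔄₁ ⊨^{AE} φ. (Theorem 2, Hyperassignment Refinement.) -/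
namespace GFG

variable {AP : Type*}

variable [DecidableEq AP]

/-! By induction on `φ`, `EA`-satisfaction is upward and `AE`-satisfaction downward closed along
`⊑`. The cases reduce to three facts about `⊑`: `dual` reverses it, `ext_ς` preserves it, and a
partition of the coarser hyperassignment pulls back to a partition of the finer one whose parts
refine the corresponding parts. -/

section Refinement

variable {X : Type*} {𝔄 𝔅 : Set (Set X)}

lemma hle.ne_empty (h : hle 𝔄 𝔅) (h𝔄 : 𝔄 ≠ ∅) : 𝔅 ≠ ∅ := by
  obtain ⟨W, hW⟩ := Set.nonempty_iff_ne_empty.2 h𝔄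
  obtain ⟨V, hV, -⟩ := h W hW
  exact Set.nonempty_iff_ne_empty.1 ⟨V, hV⟩

/-- A choice function on `𝔅` induces one on `𝔄` by passing to a refining member: `ϑ ∘ c`. -/
lemma hle.hdual (h : hle 𝔄 𝔅) : hle (hdual 𝔅) (hdual 𝔄) := by
  rintro _ ⟨ϑ, hϑ, rfl⟩
  choose! c hc𝔅 hcW using h
  refine ⟨(ϑ ∘ c) '' 𝔄, ⟨ϑ ∘ c, fun W hW => hcW W hW (hϑ _ (hc𝔅 W hW)), rfl⟩, ?_⟩
  rintro _ ⟨W, hW, rfl⟩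
  exact ⟨c W, hc𝔅 W hW, rfl⟩

/-- Split `𝔄` according to whether a member is refined inside `𝔅₁`; every other member is then
refined inside `𝔅₂`. -/
lemma hle.exists_par (h : hle 𝔄 𝔅) {𝔅₁ 𝔅₂ : Set (Set X)} (hp : (𝔅₁, 𝔅₂) ∈ par 𝔅) :
    ∃ 𝔞₁ 𝔞₂, (𝔞₁, 𝔞₂) ∈ par 𝔄 ∧ hle 𝔞₁ 𝔅₁ ∧ hle 𝔞₂ 𝔅₂ := by
  set 𝔞₁ := {W ∈ 𝔄 | ∃ V ∈ 𝔅₁, V ⊆ W}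
  refine ⟨𝔞₁, 𝔄 \ 𝔞₁, ⟨Set.union_sdiff_cancel (Set.sep_subset _ _), Set.disjoint_sdiff_right⟩,
    fun W hW => hW.2, ?_⟩
  rintro W ⟨hW, hW₁⟩
  obtain ⟨V, hV, hVW⟩ := h W hW
  rw [← hp.1] at hV
  exact ⟨V, hV.resolve_left fun hV₁ => hW₁ ⟨hW, V, hV₁, hVW⟩, hVW⟩

lemma forall_par_mono {P₁ P₂ : Set (Set X) → Prop}
    (hP₁ : ∀ 𝔄 𝔅, hle 𝔄 𝔅 → P₁ 𝔄 → P₁ 𝔅) (hP₂ : ∀ 𝔄 𝔅, hle 𝔄 𝔅 → P₂ 𝔄 → P₂ 𝔅)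
    (h : hle 𝔄 𝔅) (hs : ∀ pr ∈ par 𝔄, (pr.1 ≠ ∅ ∧ P₁ pr.1) ∨ (pr.2 ≠ ∅ ∧ P₂ pr.2)) :
    ∀ pr ∈ par 𝔅, (pr.1 ≠ ∅ ∧ P₁ pr.1) ∨ (pr.2 ≠ ∅ ∧ P₂ pr.2) := by
  rintro ⟨𝔅₁, 𝔅₂⟩ hp
  obtain ⟨𝔞₁, 𝔞₂, hpa, h₁, h₂⟩ := h.exists_par hp
  rcases hs (𝔞₁, 𝔞₂) hpa with ⟨hne, hsat⟩ | ⟨hne, hsat⟩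
  · exact Or.inl ⟨h₁.ne_empty hne, hP₁ _ _ h₁ hsat⟩
  · exact Or.inr ⟨h₂.ne_empty hne, hP₂ _ _ h₂ hsat⟩

lemma exists_par_anti {P₁ P₂ : Set (Set X) → Prop}
    (hP₁ : ∀ 𝔄 𝔅, hle 𝔄 𝔅 → P₁ 𝔅 → P₁ 𝔄) (hP₂ : ∀ 𝔄 𝔅, hle 𝔄 𝔅 → P₂ 𝔅 → P₂ 𝔄)
    (h : hle 𝔄 𝔅) (hs : ∃ pr ∈ par 𝔅, (pr.1 ≠ ∅ → P₁ pr.1) ∧ (pr.2 ≠ ∅ → P₂ pr.2)) :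
    ∃ pr ∈ par 𝔄, (pr.1 ≠ ∅ → P₁ pr.1) ∧ (pr.2 ≠ ∅ → P₂ pr.2) := by
  obtain ⟨⟨𝔅₁, 𝔅₂⟩, hp, hs₁, hs₂⟩ := hs
  obtain ⟨𝔞₁, 𝔞₂, hpa, h₁, h₂⟩ := h.exists_par hp
  exact ⟨(𝔞₁, 𝔞₂), hpa, fun hne => hP₁ _ _ h₁ (hs₁ (h₁.ne_empty hne)),
    fun hne => hP₂ _ _ h₂ (hs₂ (h₂.ne_empty hne))⟩

end Refinement

lemma hle.extSpec {𝔄 𝔅 : Set (Set (Asg AP))} (h : hle 𝔄 𝔅) (ς : Spec AP) (p : AP) :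
    hle (extSpec ς 𝔄 p) (extSpec ς 𝔅 p) := by
  rintro _ ⟨W, hW, F, hF, rfl⟩
  obtain ⟨V, hV, hVW⟩ := h W hW
  exact ⟨extSet V F p, ⟨V, hV, F, hF, rfl⟩, Set.image_mono hVW⟩

theorem hyperassignment_refinement_general (φ : Formula AP)
    (𝔄₁ 𝔄₂ : Set (Set (Asg AP)))
    (hle₁₂ : hle 𝔄₁ 𝔄₂) :
    (Sat φ .EA 𝔄₁ → Sat φ .EA 𝔄₂) ∧ (Sat φ .AE 𝔄₂ → Sat φ .AE 𝔄₁) := by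
  induction φ generalizing 𝔄₁ 𝔄₂ with
  | atom Ψ =>
    refine ⟨fun ⟨W, hW, hWΨ⟩ => ?_, fun hs W hW => ?_⟩
    · obtain ⟨V, hV, hVW⟩ := hle₁₂ W hW
      exact ⟨V, hV, hVW.trans hWΨ⟩
    · obtain ⟨V, hV, hVW⟩ := hle₁₂ W hW
      exact Set.nonempty_iff_ne_empty.1
        ((Set.nonempty_iff_ne_empty.2 (hs V hV)).mono (Set.inter_subset_inter_left Ψ hVW))
  | neg φ ih =>
    obtain ⟨ihEA, ihAE⟩ := ih 𝔄₁ 𝔄₂ hle₁₂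
    exact ⟨mt ihAE, mt ihEA⟩
  | conj φ₁ φ₂ ih₁ ih₂ =>
    have hP₁ := fun A B h => (ih₁ A B h).1
    have hP₂ := fun A B h => (ih₂ A B h).1
    exact ⟨forall_par_mono hP₁ hP₂ hle₁₂, forall_par_mono hP₁ hP₂ hle₁₂.hdual⟩
  | disj φ₁ φ₂ ih₁ ih₂ =>
    have hP₁ := fun A B h => (ih₁ A B h).2
    have hP₂ := fun A B h => (ih₂ A B h).2
    exact ⟨exists_par_anti hP₁ hP₂ hle₁₂.hdual, exists_par_anti hP₁ hP₂ hle₁₂⟩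
  | ex p ς φ ih =>
    exact ⟨(ih _ _ (hle₁₂.extSpec ς p)).1, (ih _ _ (hle₁₂.hdual.extSpec ς p)).1⟩
  | all p ς φ ih =>
    exact ⟨(ih _ _ (hle₁₂.hdual.extSpec ς p)).2, (ih _ _ (hle₁₂.extSpec ς p)).2⟩

/-- Theorem 2 (Hyperassignment Refinement). -/
theorem hyperassignment_refinement (φ : Formula AP)
    (𝔄₁ 𝔄₂ : Set (Set (Asg AP))) (h₁ : IsHyp 𝔄₁) (h₂ : IsHyp 𝔄₂)
    (hle₁₂ : hle 𝔄₁ 𝔄₂) :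
    (Sat φ .EA 𝔄₁ → Sat φ .EA 𝔄₂) ∧ (Sat φ .AE 𝔄₂ → Sat φ .AE 𝔄₁) :=
  hyperassignment_refinement_general φ 𝔄₁ 𝔄₂ hle₁₂

end GFG
end

section
/- Let 𝔄₁, 𝔄₂ be hyperassignments with 𝔄₁ ⊑ 𝔄₂, χ a quantifier prefix, and α ∈ {EA, AE}. Then evl^α(𝔄₁,χ) ⊑ evl^α(𝔄₂,χ); that is, the evolution operator is monotone with respect to the preorder ⊑. (Proposition 4, monotonicity of evolution.) -/
/-! Extension along a specification is monotone for `⊑` and dualisation is antitone, so every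
step of the evolution, an extension possibly conjugated by two dualisations, preserves `⊑`. -/

namespace GFG

variable {AP : Type*}

variable [DecidableEq AP]

/-- Quantifier symbols. -/
inductive Quant : Type
  | qex : Quant
  | qall : Quant
  deriving DecidableEq

/-- Quantifier prefixes: finite lists of triples `(Q, ς, p)`. -/
abbrev QPrefix (AP : Type*) := List (Quant × Spec AP × AP)

/-- `χφ`: the formula obtained by prefixing `φ` with the quantifiers of `χ`. -/
def applyPrefix : QPrefix AP → Formula AP → Formula AP
  | [], φ => φ
  | (Quant.qex, ς, p) :: χ, φ => .ex p ς (applyPrefix χ φ)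
  | (Quant.qall, ς, p) :: χ, φ => .all p ς (applyPrefix χ φ)

/-- `Q` is `α`-coherent iff `(Q,α) ∈ {(∃,EA),(∀,AE)}`. -/
def coherent : Quant → Flag → Bool
  | .qex, .EA => true
  | .qall, .AE => true
  | _, _ => false

/-- The evolution `evl^α(𝔄,χ)` of a hyperassignment along a quantifier prefix. -/
def evl (α : Flag) : Set (Set (Asg AP)) → QPrefix AP → Set (Set (Asg AP))
  | 𝔄, [] => 𝔄
  | 𝔄, (Q, ς, p) :: χ =>
      evl α (if coherent Q α then extSpec ς 𝔄 p else hdual (extSpec ς (hdual 𝔄) p)) χ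

theorem hdual_antitone {X : Type*} {𝔄₁ 𝔄₂ : Set (Set X)}
    (h : hle 𝔄₁ 𝔄₂) : hle (hdual 𝔄₂) (hdual 𝔄₁) := by
  rintro Y ⟨ϑ, hϑ, rfl⟩
  choose! pick hpick hsub using h
  refine ⟨(ϑ ∘ pick) '' 𝔄₁, ⟨ϑ ∘ pick, fun W hW => hsub W hW (hϑ _ (hpick W hW)), rfl⟩, ?_⟩
  rintro _ ⟨W, hW, rfl⟩
  exact ⟨pick W, hpick W hW, rfl⟩

theorem extSpec_mono {ς : Spec AP} {𝔄₁ 𝔄₂ : Set (Set (Asg AP))} {p : AP}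
    (h : hle 𝔄₁ 𝔄₂) : hle (extSpec ς 𝔄₁ p) (extSpec ς 𝔄₂ p) := by
  rintro _ ⟨W₁, hW₁, F, hF, rfl⟩
  obtain ⟨W₂, hW₂, hsub⟩ := h W₁ hW₁
  exact ⟨extSet W₂ F p, ⟨W₂, hW₂, F, hF, rfl⟩, Set.image_mono hsub⟩

theorem evl_monotone_general (𝔄₁ 𝔄₂ : Set (Set (Asg AP)))
    (hle₁₂ : hle 𝔄₁ 𝔄₂)
    (χ : QPrefix AP) (α : Flag) :
    hle (evl α 𝔄₁ χ) (evl α 𝔄₂ χ) := by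
  induction χ generalizing 𝔄₁ 𝔄₂ with
  | nil => exact hle₁₂
  | cons step χ ih =>
    obtain ⟨Q, ς, p⟩ := step
    apply ih
    split
    · exact extSpec_mono hle₁₂
    · exact hdual_antitone (extSpec_mono (hdual_antitone hle₁₂))

/-- Proposition 4: monotonicity of the evolution operator w.r.t. `⊑`. -/
theorem evl_monotone (𝔄₁ 𝔄₂ : Set (Set (Asg AP)))
    (h₁ : IsHyp 𝔄₁) (h₂ : IsHyp 𝔄₂) (hle₁₂ : hle 𝔄₁ 𝔄₂)
    (χ : QPrefix AP) (α : Flag) :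
    hle (evl α 𝔄₁ χ) (evl α 𝔄₂ χ) :=
  evl_monotone_general 𝔄₁ 𝔄₂ hle₁₂ χ α

end GFG
end
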